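/- arXiv:2512.23508 — 4 statements merged into one kernel-verified Lean document; each statement's English description precedes it below -/
import Mathlib

section
/- For all real numbers a and b, the integral over ℝ of Φ(a+bx)·φ(x) dx equals Φ(a/√(1+b²)), where Φ and φ are the standard normal CDF and density respectively. -/
open Real MeasureTheory

/-- The standard normal probability density function. -/
noncomputable def stdNormalPDF (x : ℝ) : ℝ := Real.exp (-x ^ 2 / 2) / Real.sqrt (2 * Real.pi)

/-- The standard normal cumulative distribution function. -/
noncomputable def stdNormalCDF (t : ℝ) : ℝ := ∫ s in Set.Iic t, stdNormalPDF s

/-!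
For independent standard normals `X` and `Z`, averaging `Φ (a + b X)` over `X` gives
`P (Z - b X ≤ a)`, and the law of `Z - b X` is `N(0, b²) ∗ N(0, 1) = N(0, 1 + b²)`.
-/

open ProbabilityTheory Set
open scoped NNReal

namespace MeasureTheory.Measure

variable {G : Type*} [AddMonoid G] [MeasurableSpace G] [MeasurableAdd₂ G]

lemma conv_apply (μ ν : Measure G) [SFinite ν] {s : Set G} (hs : MeasurableSet s) :
    (μ ∗ ν) s = ∫⁻ x, ν ((x + ·) ⁻¹' s) ∂μ := by
  rw [conv, map_apply measurable_add hs, prod_apply (measurable_add hs)]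
  rfl

lemma conv_real_apply (μ ν : Measure G) [IsFiniteMeasure ν] {s : Set G} (hs : MeasurableSet s) :
    (μ ∗ ν).real s = ∫ x, ν.real ((x + ·) ⁻¹' s) ∂μ := by
  simp only [measureReal_def]
  rw [conv_apply μ ν hs, integral_toReal]
  · exact (measurable_measure_prodMk_left (measurable_add hs)).aemeasurable
  · exact ae_of_all _ fun _ ↦ measure_lt_top _ _

end MeasureTheory.Measure

lemma stdNormalPDF_eq_gaussianPDFReal : stdNormalPDF = gaussianPDFReal 0 1 := by
  ext x
  simp [stdNormalPDF, gaussianPDFReal, div_eq_inv_mul]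

lemma stdNormalCDF_eq_measureReal (t : ℝ) :
    stdNormalCDF t = (gaussianReal 0 1).real (Iic t) := by
  rw [measureReal_def, gaussianReal_apply_eq_integral _ one_ne_zero,
    ENNReal.toReal_ofReal (setIntegral_nonneg measurableSet_Iic fun _ _ ↦ gaussianPDFReal_nonneg ..),
    stdNormalCDF, stdNormalPDF_eq_gaussianPDFReal]

lemma gaussianReal_real_Iic {v : ℝ≥0} (hv : v ≠ 0) (a : ℝ) :
    (gaussianReal 0 v).real (Iic a) = stdNormalCDF (a / √v) := by
  have hs : 0 < √(v : ℝ) := by positivity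
  have hmap : (gaussianReal 0 v).map (· / √v) = gaussianReal 0 1 := by
    rw [gaussianReal_map_div_const, zero_div]
    congr
    ext
    simp [Real.sq_sqrt v.coe_nonneg, hv]
  rw [stdNormalCDF_eq_measureReal, ← hmap, map_measureReal_apply (by fun_prop) measurableSet_Iic]
  congr 1
  ext x
  simp [div_le_div_iff_of_pos_right hs]

theorem stmt1 (a b : ℝ) :
    ∫ x : ℝ, stdNormalCDF (a + b * x) * stdNormalPDF x =
      stdNormalCDF (a / Real.sqrt (1 + b ^ 2)) := by
  set γ := gaussianReal 0 1
  have hconv : (γ.map (-b * ·)) ∗ γ = gaussianReal 0 (1 + b ^ 2).toNNReal := by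
    rw [gaussianReal_map_const_mul, gaussianReal_conv_gaussianReal]
    congr 1
    · simp
    · ext; simp [add_comm, sq_nonneg]
  have hmeas : Measurable fun y ↦ γ.real (Iic (a - y)) :=
    Antitone.measurable fun y y' h ↦ measureReal_mono (Iic_subset_Iic.2 (by linarith))
  calc ∫ x : ℝ, stdNormalCDF (a + b * x) * stdNormalPDF x
      = ∫ x, γ.real (Iic (a + b * x)) ∂γ := by
        simp [γ, integral_gaussianReal_eq_integral_smul, stdNormalCDF_eq_measureReal,
          stdNormalPDF_eq_gaussianPDFReal, mul_comm]
    _ = ∫ y, γ.real (Iic (a - y)) ∂(γ.map (-b * ·)) := by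
        rw [integral_map (by fun_prop) hmeas.aestronglyMeasurable]
        simp
    _ = ((γ.map (-b * ·)) ∗ γ).real (Iic a) := by
        rw [Measure.conv_real_apply _ _ measurableSet_Iic]
        simp only [preimage_const_add_Iic]
    _ = stdNormalCDF (a / Real.sqrt (1 + b ^ 2)) := by
        rw [hconv, gaussianReal_real_Iic (by positivity), Real.coe_toNNReal _ (by positivity)]
end

section
/- Let (ν_x, ν_o) be jointly Gaussian with means (μ_x, μ_o) and positive definite covariance [[K_xx, K_xo],[K_xo, K_oo]], σ > 0, and v = K_xx + K_oo − 2K_xo > 0. Then E[ν_x · 1_{ν_x > ν_o + σ}] = μ_x·(1 − Φ((μ_o + σ − μ_x)/√v)) + ((K_xx − K_xo)/√v)·φ((μ_o + σ − μ_x)/√v). -/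
/-!
Put `D = νx - νo`, `v = Var D` and `c = Cov(νx, D) / v = (Kxx - Kxo) / v`, and write
`νx = R + c D`. Then `Cov(R, D) = 0`, and since `(R, D)` is a linear image of the Gaussian
vector `(νx, νo)`, `R` and `D` are independent. Hence `E[R; D > σ] = E[R] P(D > σ)`, and the
remaining term `c E[D; D > σ]` is a truncated Gaussian mean, which reduces to
`∫_t^∞ x φ(x) dx = φ(t)`.
-/

open Real MeasureTheory ProbabilityTheory

open Filter Set

lemma gaussianPDFReal_zero_one : gaussianPDFReal 0 1 = stdNormalPDF := by
  ext x
  simp only [gaussianPDFReal, stdNormalPDF, NNReal.coe_one, mul_one, sub_zero, inv_mul_eq_div]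

lemma hasDerivAt_stdNormalPDF (x : ℝ) : HasDerivAt stdNormalPDF (-x * stdNormalPDF x) x := by
  have h : HasDerivAt (fun y : ℝ => -y ^ 2 / 2) (-x) x :=
    ((hasDerivAt_pow 2 x).neg.div_const 2).congr_deriv (by ring)
  exact (h.exp.div_const (√(2 * π))).congr_deriv (by simp only [stdNormalPDF]; ring)

lemma tendsto_stdNormalPDF_atTop : Tendsto stdNormalPDF atTop (nhds 0) := by
  have h : Tendsto (fun y : ℝ => -y ^ 2 / 2) atTop atBot :=
    (tendsto_neg_atBot_iff.mpr (tendsto_pow_atTop two_ne_zero)).atBot_div_const two_pos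
  rw [← zero_div (√(2 * π))]
  exact (tendsto_exp_atBot.comp h).div_const _

lemma integrable_mul_stdNormalPDF : Integrable fun x => x * stdNormalPDF x := by
  convert (integrable_mul_exp_neg_mul_sq (b := 1 / 2) one_half_pos).div_const (√(2 * π)) using 2
  simp only [stdNormalPDF]
  ring_nf

lemma integral_Ioi_mul_stdNormalPDF (t : ℝ) :
    ∫ x in Ioi t, x * stdNormalPDF x = stdNormalPDF t := by
  rw [integral_Ioi_of_hasDerivAt_of_tendsto' (f := fun y => -stdNormalPDF y)
    (fun x _ => by simpa using (hasDerivAt_stdNormalPDF x).fun_neg)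
    integrable_mul_stdNormalPDF.integrableOn tendsto_stdNormalPDF_atTop.neg]
  simp

lemma measureReal_Ioi_gaussianReal_zero_one (t : ℝ) :
    (gaussianReal 0 1).real (Ioi t) = 1 - stdNormalCDF t := by
  rw [← compl_Iic, measureReal_compl measurableSet_Iic, probReal_univ, measureReal_def,
    gaussianReal_apply_eq_integral 0 one_ne_zero, ENNReal.toReal_ofReal, gaussianPDFReal_zero_one]
  · rfl
  · exact setIntegral_nonneg measurableSet_Iic fun x _ => gaussianPDFReal_nonneg 0 1 x

lemma setIntegral_Ioi_id_gaussianReal_zero_one (t : ℝ) :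
    ∫ x in Ioi t, x ∂gaussianReal 0 1 = stdNormalPDF t := by
  rw [← integral_indicator measurableSet_Ioi, integral_gaussianReal_eq_integral_smul one_ne_zero,
    ← integral_Ioi_mul_stdNormalPDF, ← integral_indicator measurableSet_Ioi,
    gaussianPDFReal_zero_one]
  congr 1 with x
  by_cases hx : x ∈ Ioi t <;> simp [hx, mul_comm]

section GaussianReal

variable (m : ℝ) {v : ℝ} (hv : 0 < v)
include hv

lemma gaussianReal_eq_map_gaussianReal_zero_one :
    gaussianReal m v.toNNReal = (gaussianReal 0 1).map (fun z => √v * z + m) := by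
  have hcomp : (fun z : ℝ => √v * z + m) = (· + m) ∘ (√v * ·) := rfl
  rw [hcomp, ← Measure.map_map (measurable_add_const m) (measurable_const_mul _),
    gaussianReal_map_const_mul, gaussianReal_map_add_const]
  congr
  · ring
  · ext; simp [Real.sq_sqrt hv.le, Real.coe_toNNReal _ hv.le]

lemma preimage_Ioi_affine (t : ℝ) :
    (fun z => √v * z + m) ⁻¹' Ioi t = Ioi ((t - m) / √v) := by
  ext z
  simp only [mem_preimage, mem_Ioi, div_lt_iff₀ (sqrt_pos.mpr hv)]
  constructor <;> intro h <;> linarith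

lemma measureReal_Ioi_gaussianReal (t : ℝ) :
    (gaussianReal m v.toNNReal).real (Ioi t) = 1 - stdNormalCDF ((t - m) / √v) := by
  rw [gaussianReal_eq_map_gaussianReal_zero_one m hv, map_measureReal_apply (by fun_prop)
    measurableSet_Ioi, preimage_Ioi_affine m hv, measureReal_Ioi_gaussianReal_zero_one]

lemma setIntegral_Ioi_id_gaussianReal (t : ℝ) :
    ∫ x in Ioi t, x ∂gaussianReal m v.toNNReal =
      m * (1 - stdNormalCDF ((t - m) / √v)) + √v * stdNormalPDF ((t - m) / √v) := by
  have hZ : Integrable (fun z : ℝ => z) (gaussianReal 0 1) :=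
    (memLp_id_gaussianReal' 1 ENNReal.one_ne_top).integrable le_rfl
  rw [gaussianReal_eq_map_gaussianReal_zero_one m hv,
    setIntegral_map (f := fun x => x) measurableSet_Ioi aestronglyMeasurable_id (by fun_prop),
    preimage_Ioi_affine m hv,
    integral_add (hZ.const_mul _).integrableOn (integrable_const m).integrableOn,
    integral_const_mul, setIntegral_const, setIntegral_Ioi_id_gaussianReal_zero_one,
    measureReal_Ioi_gaussianReal_zero_one, smul_eq_mul]
  ring

end GaussianReal

section RandomVariables

variable {Ω : Type*} [MeasurableSpace Ω] {P : Measure Ω}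

lemma hasLaw_of_map_eq {𝓧 : Type*} [MeasurableSpace 𝓧] {X : Ω → 𝓧} {μ : Measure 𝓧} [NeZero μ]
    (h : P.map X = μ) : HasLaw X μ P :=
  ⟨aemeasurable_of_map_neZero (h ▸ inferInstance), h⟩

lemma ProbabilityTheory.HasLaw.measureReal_preimage_Ioi_gaussianReal {X : Ω → ℝ} {m v : ℝ}
    (hX : HasLaw X (gaussianReal m v.toNNReal) P) (hv : 0 < v) (t : ℝ) :
    P.real (X ⁻¹' Ioi t) = 1 - stdNormalCDF ((t - m) / √v) := by
  rw [← map_measureReal_apply_of_aemeasurable hX.aemeasurable measurableSet_Ioi, hX.map_eq,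
    measureReal_Ioi_gaussianReal m hv]

lemma ProbabilityTheory.HasLaw.setIntegral_preimage_Ioi_gaussianReal {X : Ω → ℝ} {m v : ℝ}
    (hX : HasLaw X (gaussianReal m v.toNNReal) P) (hv : 0 < v) (t : ℝ) :
    ∫ ω in X ⁻¹' Ioi t, X ω ∂P =
      m * (1 - stdNormalCDF ((t - m) / √v)) + √v * stdNormalPDF ((t - m) / √v) := by
  rw [← setIntegral_map (f := fun x => x) measurableSet_Ioi aestronglyMeasurable_id
    hX.aemeasurable, hX.map_eq, setIntegral_Ioi_id_gaussianReal m hv]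

lemma ProbabilityTheory.IndepFun.setIntegral_preimage {β : Type*} [MeasurableSpace β]
    {X : Ω → ℝ} {Y : Ω → β}
    (hXY : IndepFun X Y P) (hX : AEStronglyMeasurable X P) (hY : AEMeasurable Y P)
    {s : Set β} (hs : MeasurableSet s) :
    ∫ ω in Y ⁻¹' s, X ω ∂P = P[X] * P.real (Y ⁻¹' s) := by
  have hnull := hY.nullMeasurableSet_preimage hs
  have hind : IndepFun X ((s.indicator fun _ => (1 : ℝ)) ∘ Y) P :=
    hXY.comp (φ := id) measurable_id (measurable_const.indicator hs)
  have hpre : (s.indicator fun _ => (1 : ℝ)) ∘ Y = (Y ⁻¹' s).indicator fun _ => 1 := by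
    ext ω; by_cases hω : Y ω ∈ s <;> simp [hω]
  calc ∫ ω in Y ⁻¹' s, X ω ∂P = ∫ ω, X ω * ((s.indicator fun _ => (1 : ℝ)) ∘ Y) ω ∂P := by
        rw [← integral_indicator₀ hnull, hpre]
        congr 1 with ω
        by_cases hω : ω ∈ Y ⁻¹' s <;> simp [hω]
    _ = P[X] * P.real (Y ⁻¹' s) := by
        rw [hind.integral_fun_mul_eq_mul_integral hX (by rw [hpre]; exact
          (aestronglyMeasurable_const.indicator₀ hnull)), hpre, integral_indicator₀ hnull,
          setIntegral_const, smul_eq_mul, mul_one]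

lemma hasGaussianLaw_prodMk_of_map_eq_gaussianReal {X Y : Ω → ℝ}
    (h : ∀ a b : ℝ, ∃ m v, P.map (fun ω => a * X ω + b * Y ω) = gaussianReal m v) :
    HasGaussianLaw (fun ω => (X ω, Y ω)) P := by
  have aem (a b : ℝ) : AEMeasurable (fun ω => a * X ω + b * Y ω) P := by
    obtain ⟨m, v, hab⟩ := h a b
    exact (hasLaw_of_map_eq hab).aemeasurable
  have hX : AEMeasurable X P := by simpa using aem 1 0
  have hY : AEMeasurable Y P := by simpa using aem 0 1
  refine ⟨isGaussian_of_map_eq_gaussianReal fun L => ?_⟩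
  obtain ⟨m, v, hL⟩ := h (L (1, 0)) (L (0, 1))
  refine ⟨m, v, ?_⟩
  rw [AEMeasurable.map_map_of_aemeasurable L.continuous.aemeasurable (hX.prodMk hY), ← hL]
  congr 1 with ω
  have hbasis : (X ω, Y ω) = X ω • ((1 : ℝ), (0 : ℝ)) + Y ω • ((0 : ℝ), (1 : ℝ)) := by
    ext <;> simp
  rw [Function.comp_apply, hbasis, map_add, map_smul, map_smul, smul_eq_mul, smul_eq_mul,
    mul_comm, mul_comm (Y ω)]

end RandomVariables

lemma quadratic_nonneg_of_posDef {Kxx Kxo Koo : ℝ} (hKxx : 0 < Kxx) (hpd : Kxo ^ 2 < Kxx * Koo)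
    (a b : ℝ) : 0 ≤ a ^ 2 * Kxx + 2 * a * b * Kxo + b ^ 2 * Koo := by
  have hsq : Kxx * (a ^ 2 * Kxx + 2 * a * b * Kxo + b ^ 2 * Koo) =
      (a * Kxx + b * Kxo) ^ 2 + b ^ 2 * (Kxx * Koo - Kxo ^ 2) := by ring
  have : 0 ≤ Kxx * (a ^ 2 * Kxx + 2 * a * b * Kxo + b ^ 2 * Koo) := by
    rw [hsq]; nlinarith [sq_nonneg (a * Kxx + b * Kxo), sq_nonneg b]
  exact nonneg_of_mul_nonneg_right (by linarith) hKxx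

section LinearCombinations

variable {Ω : Type*} [MeasurableSpace Ω] {P : Measure Ω} {X Y : Ω → ℝ} {μX μY KXX KXY KYY : ℝ}

lemma variance_linear_of_map_eq_gaussianReal
    (hXY : ∀ a b : ℝ, P.map (fun ω => a * X ω + b * Y ω) =
      gaussianReal (a * μX + b * μY) (a ^ 2 * KXX + 2 * a * b * KXY + b ^ 2 * KYY).toNNReal)
    {a b : ℝ} (hq : 0 ≤ a ^ 2 * KXX + 2 * a * b * KXY + b ^ 2 * KYY) :
    Var[fun ω => a * X ω + b * Y ω; P] = a ^ 2 * KXX + 2 * a * b * KXY + b ^ 2 * KYY := by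
  rw [(hasLaw_of_map_eq (hXY a b)).variance_eq, variance_id_gaussianReal,
    Real.coe_toNNReal _ hq]

lemma covariance_linear_of_map_eq_gaussianReal
    (hXY : ∀ a b : ℝ, P.map (fun ω => a * X ω + b * Y ω) =
      gaussianReal (a * μX + b * μY) (a ^ 2 * KXX + 2 * a * b * KXY + b ^ 2 * KYY).toNNReal)
    (hpsd : ∀ a b : ℝ, 0 ≤ a ^ 2 * KXX + 2 * a * b * KXY + b ^ 2 * KYY) (a b a' b' : ℝ) :
    cov[fun ω => a * X ω + b * Y ω, fun ω => a' * X ω + b' * Y ω; P] =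
      a * a' * KXX + (a * b' + a' * b) * KXY + b * b' * KYY := by
  have hgauss (a b : ℝ) : HasGaussianLaw (fun ω => a * X ω + b * Y ω) P :=
    (hasLaw_of_map_eq (hXY a b)).hasGaussianLaw
  have := (hgauss 0 0).isProbabilityMeasure
  have hpolar := variance_add (hgauss a b).memLp_two (hgauss a' b').memLp_two
  have hsum : (fun ω => a * X ω + b * Y ω) + (fun ω => a' * X ω + b' * Y ω) =
      fun ω => (a + a') * X ω + (b + b') * Y ω := by
    ext ω; simp only [Pi.add_apply]; ring
  rw [hsum, variance_linear_of_map_eq_gaussianReal hXY (hpsd _ _),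
    variance_linear_of_map_eq_gaussianReal hXY (hpsd _ _),
    variance_linear_of_map_eq_gaussianReal hXY (hpsd _ _)] at hpolar
  linear_combination -hpolar / 2

lemma indepFun_linear_of_map_eq_gaussianReal
    (hXY : ∀ a b : ℝ, P.map (fun ω => a * X ω + b * Y ω) =
      gaussianReal (a * μX + b * μY) (a ^ 2 * KXX + 2 * a * b * KXY + b ^ 2 * KYY).toNNReal)
    (hpsd : ∀ a b : ℝ, 0 ≤ a ^ 2 * KXX + 2 * a * b * KXY + b ^ 2 * KYY) {a b a' b' : ℝ}
    (horth : a * a' * KXX + (a * b' + a' * b) * KXY + b * b' * KYY = 0) :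
    IndepFun (fun ω => a * X ω + b * Y ω) (fun ω => a' * X ω + b' * Y ω) P := by
  have hjoint := hasGaussianLaw_prodMk_of_map_eq_gaussianReal fun a b => ⟨_, _, hXY a b⟩
  let L : ℝ × ℝ →L[ℝ] ℝ × ℝ :=
    (a • ContinuousLinearMap.fst ℝ ℝ ℝ + b • ContinuousLinearMap.snd ℝ ℝ ℝ).prod
      (a' • ContinuousLinearMap.fst ℝ ℝ ℝ + b' • ContinuousLinearMap.snd ℝ ℝ ℝ)
  refine HasGaussianLaw.indepFun_of_covariance_eq_zero (hjoint.map_fun L) ?_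
  rw [covariance_linear_of_map_eq_gaussianReal hXY hpsd, horth]

end LinearCombinations

theorem stmt9_general {Ω : Type*} [MeasurableSpace Ω] (P : Measure Ω)
    (νx νo : Ω → ℝ) (μx μo Kxx Kxo Koo σ : ℝ)
    (hKxx : 0 < Kxx) (hpd : Kxo ^ 2 < Kxx * Koo)
    (hv : 0 < Kxx + Koo - 2 * Kxo)
    (hjoint : ∀ a b : ℝ,
      Measure.map (fun ω => a * νx ω + b * νo ω) P =
        gaussianReal (a * μx + b * μo)
          (Real.toNNReal (a ^ 2 * Kxx + 2 * a * b * Kxo + b ^ 2 * Koo))) :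
    ∫ ω in {ω | νx ω > νo ω + σ}, νx ω ∂P =
      μx * (1 - stdNormalCDF ((μo + σ - μx) / Real.sqrt (Kxx + Koo - 2 * Kxo))) +
        ((Kxx - Kxo) / Real.sqrt (Kxx + Koo - 2 * Kxo)) *
          stdNormalPDF ((μo + σ - μx) / Real.sqrt (Kxx + Koo - 2 * Kxo)) := by
  set v := Kxx + Koo - 2 * Kxo
  set c := (Kxx - Kxo) / v
  have hcv : c * v = Kxx - Kxo := div_mul_cancel₀ _ hv.ne'
  -- `R` is the residual of the regression of `νx` on `D`, hence independent of `D`.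
  set R := fun ω => (1 - c) * νx ω + c * νo ω
  set D := fun ω => 1 * νx ω + (-1) * νo ω
  have hD : HasLaw D (gaussianReal (μx - μo) v.toNNReal) P := by
    convert hasLaw_of_map_eq (hjoint 1 (-1)) using 3 <;> ring
  have hR := hasLaw_of_map_eq (hjoint (1 - c) c)
  have hindep : IndepFun R D P :=
    indepFun_linear_of_map_eq_gaussianReal hjoint (quadratic_nonneg_of_posDef hKxx hpd)
      (by linear_combination -hcv)
  have hevent : {ω | νx ω > νo ω + σ} = D ⁻¹' Ioi σ := by
    ext ω
    simp only [mem_ofPred_eq, mem_preimage, mem_Ioi, D]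
    constructor <;> intro h <;> linarith
  have hsplit : ∀ ω, νx ω = R ω + c * D ω := fun ω => by simp only [R, D]; ring
  have hRint := hR.hasGaussianLaw.integrable
  have hDint := hD.hasGaussianLaw.integrable
  calc ∫ ω in {ω | νx ω > νo ω + σ}, νx ω ∂P
      = ∫ ω in D ⁻¹' Ioi σ, R ω ∂P + c * ∫ ω in D ⁻¹' Ioi σ, D ω ∂P := by
        rw [hevent, ← integral_const_mul, ← integral_add hRint.integrableOn
          (hDint.const_mul c).integrableOn]
        exact integral_congr_ae (ae_of_all _ hsplit)
    _ = _ := by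
        rw [hindep.setIntegral_preimage hRint.aestronglyMeasurable hD.aemeasurable
            measurableSet_Ioi, hR.integral_eq, integral_id_gaussianReal,
          hD.setIntegral_preimage_Ioi_gaussianReal hv,
          hD.measureReal_preimage_Ioi_gaussianReal hv, show σ - (μx - μo) = μo + σ - μx by ring]
        have hc : c * √v = (Kxx - Kxo) / √v := by
          rw [eq_div_iff (sqrt_pos.mpr hv).ne', mul_assoc, mul_self_sqrt hv.le, hcv]
        linear_combination stdNormalPDF ((μo + σ - μx) / √v) * hc

/-- `(νx, νo)` jointly Gaussian with means `(μx, μo)`, positive definite covariance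
`[[Kxx, Kxo],[Kxo, Koo]]` (encoded by the law of every linear combination),
`σ > 0` and `v = Kxx + Koo − 2Kxo > 0`. Then
`E[νx · 1_{νx > νo + σ}] = μx (1 − Φ((μo + σ − μx)/√v)) + ((Kxx − Kxo)/√v) φ((μo + σ − μx)/√v)`. -/
theorem stmt9 {Ω : Type*} [MeasurableSpace Ω] (P : Measure Ω) [IsProbabilityMeasure P]
    (νx νo : Ω → ℝ) (μx μo Kxx Kxo Koo σ : ℝ)
    (hKxx : 0 < Kxx) (hKoo : 0 < Koo) (hpd : Kxo ^ 2 < Kxx * Koo)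
    (hσ : 0 < σ) (hv : 0 < Kxx + Koo - 2 * Kxo)
    (hjoint : ∀ a b : ℝ,
      Measure.map (fun ω => a * νx ω + b * νo ω) P =
        gaussianReal (a * μx + b * μo)
          (Real.toNNReal (a ^ 2 * Kxx + 2 * a * b * Kxo + b ^ 2 * Koo))) :
    ∫ ω in {ω | νx ω > νo ω + σ}, νx ω ∂P =
      μx * (1 - stdNormalCDF ((μo + σ - μx) / Real.sqrt (Kxx + Koo - 2 * Kxo))) +
        ((Kxx - Kxo) / Real.sqrt (Kxx + Koo - 2 * Kxo)) *
          stdNormalPDF ((μo + σ - μx) / Real.sqrt (Kxx + Koo - 2 * Kxo)) :=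
  stmt9_general P νx νo μx μo Kxx Kxo Koo σ hKxx hpd hv hjoint
end

section
/- Let X be a finite set, A = {0,1}, and ν₂ : X → ℝ. Suppose ν(a,x) = ν₁(a) + ν₂(x) is an additive utility where ν₁ : A → ℝ does not depend on the context a* ∈ {0,1}. Then it is impossible that both: (D1) for all o, x, y ∈ X, min(ν(1,o), ν(1,y)) > ν(0,x), and (D2) for all o, x, y ∈ X, min(ν(0,o), ν(0,x)) > ν(1,y). -/
/-- With a context-independent additive utility `ν(a,x) = ν₁(a) + ν₂(x)` on
`{0,1} × X` (shutdown bit modelled by `Bool`), the two shutdown desiderata D1 and D2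
cannot both hold. -/
theorem stmt13 {X : Type*} [Fintype X] [Nonempty X] (ν₁ : Bool → ℝ) (ν₂ : X → ℝ) :
    ¬ ((∀ o x y : X, min (ν₁ true + ν₂ o) (ν₁ true + ν₂ y) > ν₁ false + ν₂ x) ∧
        (∀ o x y : X, min (ν₁ false + ν₂ o) (ν₁ false + ν₂ x) > ν₁ true + ν₂ y)) := by
  rintro ⟨h1, h2⟩
  obtain ⟨x⟩ := ‹Nonempty X›
  have a := h1 x x x
  have b := h2 x x x
  simp [min_self] at a b
  linarith
end

section
/- Let X be a finite set and ν : X → ℝ^d. Define the choice function C(A) = {z ∈ A : there is no y ∈ A with ν_i(y) > ν_i(z) for all i = 1,…,d} (the Pareto-undominated elements). Then C satisfies path independence: C(A ∪ B) = C(C(A) ∪ B) for all nonempty A, B ⊆ X. -/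
open scoped Classical

/-- The Pareto (vector-optimisation) choice function: the elements of `A` not strictly
Pareto-dominated by any element of `A`. -/
noncomputable def paretoChoice {X : Type*} {d : ℕ} (ν : X → Fin d → ℝ) (A : Finset X) :
    Finset X :=
  A.filter (fun z => ¬ ∃ y ∈ A, ∀ i : Fin d, ν y i > ν z i)

lemma pareto_aux {X : Type*} [DecidableEq X] {d : ℕ} (ν : X → Fin d → ℝ) (hd : 0 < d)
    (S : Finset X) :
    ∀ n : ℕ, ∀ z ∈ S, (S.filter (fun y => ∀ i, ν y i > ν z i)).card ≤ n →
      ∃ w ∈ paretoChoice ν S, w = z ∨ ∀ i, ν w i > ν z i := by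
  intro n
  induction n with
  | zero =>
    intro z hz hc
    refine ⟨z, ?_, Or.inl rfl⟩
    simp only [paretoChoice, Finset.mem_filter]
    refine ⟨hz, ?_⟩
    rintro ⟨y, hy, hdom⟩
    have hmem : y ∈ S.filter (fun y => ∀ i, ν y i > ν z i) :=
      Finset.mem_filter.2 ⟨hy, hdom⟩
    rw [Finset.card_eq_zero.1 (Nat.le_zero.1 hc)] at hmem
    exact absurd hmem (Finset.notMem_empty y)
  | succ n ih =>
    intro z hz hc
    by_cases h : ∃ y ∈ S, ∀ i, ν y i > ν z i
    · obtain ⟨y, hy, hdom⟩ := h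
      have hymem : y ∈ S.filter (fun y => ∀ i, ν y i > ν z i) :=
        Finset.mem_filter.2 ⟨hy, hdom⟩
      have hsub : S.filter (fun a => ∀ i, ν a i > ν y i) ⊆
          (S.filter (fun y => ∀ i, ν y i > ν z i)).erase y := by
        intro a ha
        rw [Finset.mem_filter] at ha
        refine Finset.mem_erase.2 ⟨?_, Finset.mem_filter.2 ⟨ha.1, fun i =>
          lt_trans (hdom i) (ha.2 i)⟩⟩
        rintro rfl
        exact lt_irrefl _ (ha.2 ⟨0, hd⟩)
      have hcard : (S.filter (fun a => ∀ i, ν a i > ν y i)).card ≤ n := by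
        have h1 := Finset.card_le_card hsub
        have h2 := Finset.card_erase_of_mem hymem
        omega
      obtain ⟨w, hw, hwy⟩ := ih y hy hcard
      refine ⟨w, hw, Or.inr ?_⟩
      rcases hwy with rfl | h'
      · exact hdom
      · exact fun i => lt_trans (hdom i) (h' i)
    · exact ⟨z, Finset.mem_filter.2 ⟨hz, h⟩, Or.inl rfl⟩

lemma pareto_exists_max {X : Type*} [DecidableEq X] {d : ℕ} (ν : X → Fin d → ℝ) (hd : 0 < d)
    (S : Finset X) (z : X) (hz : z ∈ S) :
    ∃ w ∈ paretoChoice ν S, w = z ∨ ∀ i, ν w i > ν z i :=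
  pareto_aux ν hd S _ z hz le_rfl

/-- The Pareto choice function satisfies Plott's path independence. -/
theorem stmt17 {X : Type*} [DecidableEq X] {d : ℕ} (ν : X → Fin d → ℝ) (A B : Finset X)
    (hA : A.Nonempty) (hB : B.Nonempty) :
    paretoChoice ν (A ∪ B) = paretoChoice ν (paretoChoice ν A ∪ B) := by
  rcases Nat.eq_zero_or_pos d with rfl | hd
  · -- d = 0 : everything dominates everything, choice of a nonempty set is empty
    have key : ∀ S : Finset X, S.Nonempty → paretoChoice ν S = ∅ := by
      intro S hS
      obtain ⟨x, hx⟩ := hS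
      ext a
      simp only [paretoChoice, Finset.mem_filter, Finset.notMem_empty, iff_false, not_and]
      intro _ h
      exact h ⟨x, hx, fun i => i.elim0⟩
    rw [key A hA, key (A ∪ B) (hA.mono Finset.subset_union_left),
      key (∅ ∪ B) (hB.mono Finset.subset_union_right)]
  · ext z
    simp only [paretoChoice, Finset.mem_filter, Finset.mem_union]
    constructor
    · rintro ⟨hz, hnd⟩
      refine ⟨hz.imp (fun hzA => ⟨hzA, fun ⟨y, hy, hdom⟩ => hnd ⟨y, Or.inl hy, hdom⟩⟩) id, ?_⟩
      rintro ⟨y, hy, hdom⟩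
      exact hnd ⟨y, hy.imp And.left id, hdom⟩
    · rintro ⟨hz, hnd⟩
      refine ⟨hz.imp And.left id, ?_⟩
      rintro ⟨y, hy, hdom⟩
      rcases hy with hyA | hyB
      · obtain ⟨w, hw, hwy⟩ := pareto_exists_max ν hd A y hyA
        refine hnd ⟨w, Or.inl (Finset.mem_filter.1 hw), ?_⟩
        rcases hwy with rfl | h'
        · exact hdom
        · exact fun i => lt_trans (hdom i) (h' i)
      · exact hnd ⟨y, Or.inr hyB, hdom⟩
end
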